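/- The functor D preserves the deformation structure: Let A_ħ be a formal bigraded deformation of an A∞-algebra A with compatible bigrading of s-th type, and set D(A_ħ) = {a ∈ A_ħ : m̃₁(a) ∈ ħ·A_ħ} with structure maps m̃_i^D = ħ^{i−2} m̃_i restricted to D(A_ħ). Then: (1) the m̃_i^D map D(A_ħ)-tuples into D(A_ħ); (2) D(A_ħ) is an A∞-algebra over k[ħ]; (3) D(A_ħ) is ħ-torsion-free and bigraded complete, hence ħ-topologically free; and (4) D(A_ħ) is a formal bigraded deformation of an A∞-algebra with compatible bigrading of (s+1)-th type. If moreover m₁ = 0 on A, then D(A_ħ) = T(A_ħ). -/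

import Mathlib

open scoped BigOperators

namespace Paper

/-- The family of `n`-ary multilinear structure maps of an (`A_N`- or `A_∞`-)algebra. -/
abbrev Ops (k A : Type) [CommRing k] [AddCommGroup A] [Module k A] :=
  ∀ n : ℕ, MultilinearMap k (fun _ : Fin n => A) A

/-- The structure maps of a morphism of (`A_N`- or `A_∞`-)algebras. -/
abbrev MorMaps (k A B : Type) [CommRing k] [AddCommGroup A] [Module k A]
    [AddCommGroup B] [Module k B] :=
  ∀ n : ℕ, MultilinearMap k (fun _ : Fin n => A) B

variable {k A B M N : Type} [CommRing k] [AddCommGroup A] [Module k A]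
  [AddCommGroup B] [Module k B]

/-- Insert the `s`-ary operation `m s` at position `r` of an argument sequence. -/
def inner (m : Ops k A) (r s : ℕ) (a : ℕ → A) : ℕ → A := fun i =>
  if i < r then a i
  else if i = r then m s (fun j : Fin s => a (r + (j : ℕ)))
  else a (i + s - 1)

/-- The left-hand side of the `n`-th Stasheff identity `SI(n)`,
`∑_{r+s+t=n} (-1)^{r+st} m_{r+1+t} ∘ (id^r ⊗ m_s ⊗ id^t)`, evaluated at `a`. -/
def SIsum (m : Ops k A) (n : ℕ) (a : ℕ → A) : A :=
  ∑ r ∈ Finset.range (n+1), ∑ s ∈ Finset.range (n+1), ∑ t ∈ Finset.range (n+1),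
    (if r + s + t = n ∧ 1 ≤ s then
      ((-1 : ℤ)^(r + s*t)) • (m (r+1+t) (fun i : Fin (r+1+t) => inner m r s a (i : ℕ)))
    else 0)

/-- The `n`-th Stasheff identity. -/
def SI (m : Ops k A) (n : ℕ) : Prop := ∀ a : ℕ → A, SIsum m n a = 0

def offset {q : ℕ} (ι : Fin q → ℕ) (j : Fin q) : ℕ :=
  ∑ x ∈ Finset.univ.filter (fun x : Fin q => (x : ℕ) < (j : ℕ)), ι x

/-- The left-hand side of the `n`-th morphism identity `MI(n)` for `f : A → B`. -/
def MIlhs (mA : Ops k A) (f : MorMaps k A B) (n : ℕ) (a : ℕ → A) : B :=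
  ∑ r ∈ Finset.range (n+1), ∑ s ∈ Finset.range (n+1), ∑ t ∈ Finset.range (n+1),
    (if r + s + t = n ∧ 1 ≤ s then
      ((-1 : ℤ)^(r + s*t)) • (f (r+1+t) (fun i : Fin (r+1+t) => inner mA r s a (i : ℕ)))
    else 0)

/-- The right-hand side of the `n`-th morphism identity `MI(n)`:
`∑_q ∑_{i₁+⋯+i_q = n} (-1)^w m_q^B ∘ (f_{i₁} ⊗ ⋯ ⊗ f_{i_q})` evaluated at `a`. -/
def MIrhs (mB : Ops k B) (f : MorMaps k A B) (n : ℕ) (a : ℕ → A) : B :=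
  ∑ q ∈ Finset.range (n+1),
    (Finset.univ : Finset (Fin q → Fin (n+1))).sum (fun ι =>
      (if (∑ j, ((ι j : ℕ))) = n ∧ (∀ j, 1 ≤ ((ι j : ℕ))) then
        ((-1 : ℤ)^(∑ j : Fin q, (q - 1 - (j : ℕ)) * ((ι j : ℕ) - 1))) •
          (mB q (fun j : Fin q => f ((ι j : ℕ)) (fun l : Fin ((ι j : ℕ)) =>
            a (offset (fun x => ((ι x : ℕ))) j + (l : ℕ)))))
      else 0))

/-- The `n`-th morphism (Stasheff) identity `MI(n)`. -/
def MI (mA : Ops k A) (mB : Ops k B) (f : MorMaps k A B) (n : ℕ) : Prop :=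
  ∀ a : ℕ → A, MIlhs mA f n a = MIrhs mB f n a

/-- `g` is a quasi-isomorphism of complexes from `(M, dM)` to `(N, dN)`. -/
def QIso {M N : Type} [AddCommGroup M] [AddCommGroup N]
    (dM : M → M) (dN : N → N) (g : M → N) : Prop :=
  (∀ x, g (dM x) = dN (g x)) ∧
  (∀ x, dM x = 0 → (∃ y, g x = dN y) → ∃ z, x = dM z) ∧
  (∀ y, dN y = 0 → ∃ x z, dM x = 0 ∧ y = g x + dN z)

/-- Homogeneity of the structure maps with respect to a bigrading:
`m_n` has bidegree `deg n`. -/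
def Homog2 {k M : Type} [CommRing k] [AddCommGroup M] [Module k M]
    (G : ℤ × ℤ → Submodule k M) (m : Ops k M) (deg : ℕ → ℤ × ℤ) : Prop :=
  ∀ (n : ℕ) (p : Fin n → ℤ × ℤ) (a : Fin n → M),
    (∀ i, a i ∈ G (p i)) → m n a ∈ G ((∑ i, p i) + deg n)

/-- Homogeneity of the components of a morphism with respect to bigradings. -/
def Homog2Mor {k M N : Type} [CommRing k] [AddCommGroup M] [Module k M]
    [AddCommGroup N] [Module k N]
    (GM : ℤ × ℤ → Submodule k M) (GN : ℤ × ℤ → Submodule k N)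
    (f : MorMaps k M N) (deg : ℕ → ℤ × ℤ) : Prop :=
  ∀ (n : ℕ) (p : Fin n → ℤ × ℤ) (a : Fin n → M),
    (∀ i, a i ∈ GM (p i)) → f n a ∈ GN ((∑ i, p i) + deg n)

/-- Homogeneity with respect to a single (cohomological) grading: `m_n` has degree `2 - n`. -/
def Homog1 {k M : Type} [CommRing k] [AddCommGroup M] [Module k M]
    (G : ℤ → Submodule k M) (m : Ops k M) : Prop :=
  ∀ (n : ℕ) (p : Fin n → ℤ) (a : Fin n → M),
    (∀ i, a i ∈ G (p i)) → m n a ∈ G ((∑ i, p i) + (2 - (n : ℤ)))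

/-- `e` is a strict unit for the structure maps `m`. -/
def IsStrictUnit {k A : Type} [CommRing k] [AddCommGroup A] [Module k A]
    (m : Ops k A) (e : A) : Prop :=
  (∀ a, m 2 ![e, a] = a) ∧ (∀ a, m 2 ![a, e] = a) ∧
  (∀ (n : ℕ), n ≠ 2 → ∀ (a : Fin n → A) (i : Fin n), a i = e → m n a = 0)

/-- The underlying differential of an `A_∞`-structure. -/
def unary {k M : Type} [CommRing k] [AddCommGroup M] [Module k M] (m : Ops k M) : M → M :=
  fun x => m 1 (fun _ => x)

/-- `(M, ℬ, h, ι, mM)` is a formal bigraded deformation of the `A_∞`-algebra `(A, 𝒜, mA)`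
with compatible bigrading of `s`-th type.  Here `h` is the action of `ħ` (of bidegree
`(-1,1)`), `ι` identifies `A` with the reduction modulo `ħ`, and `M` is `ħ`-topologically
free (torsion-free, separated, bigraded complete and split). -/
structure IsDefo (k : Type) [CommRing k] {A M : Type}
    [AddCommGroup A] [Module k A] [AddCommGroup M] [Module k M]
    (s : ℤ) (GA : ℤ × ℤ → Submodule k A) (mA : Ops k A)
    (GM : ℤ × ℤ → Submodule k M) (h : M →ₗ[k] M) (iota : A →ₗ[k] M) (mM : Ops k M) :
    Prop where
  internalM : DirectSum.IsInternal GM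
  hHom : ∀ (pq : ℤ × ℤ) (x : M), x ∈ GM pq → h x ∈ GM (pq.1 - 1, pq.2 + 1)
  torsionFree : Function.Injective h
  sep : (⨅ N : ℕ, LinearMap.range (h ^ N)) = ⊥
  complete : ∀ (pq : ℤ × ℤ) (x : ℕ → M), (∀ N, x N ∈ GM pq) →
      (∀ N, x (N+1) - x N ∈ LinearMap.range (h ^ N)) →
      ∃ y ∈ GM pq, ∀ N, y - x N ∈ LinearMap.range (h ^ N)
  iotaInj : Function.Injective iota
  iotaHom : ∀ (pq : ℤ × ℤ) (x : A), x ∈ GA pq → iota x ∈ GM pq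
  split : ∀ y : M, ∃ a b, y = iota a + h b
  mSI : ∀ n, 1 ≤ n → SI mM n
  mHomog : Homog2 GM mM (fun n => ((2 - (n : ℤ)) * s, (2 - (n : ℤ)) * (1 - s)))
  hLinear : ∀ (n : ℕ) (a : Fin n → M) (i : Fin n) (x : M),
      mM n (Function.update a i (h x)) = h (mM n (Function.update a i x))
  reduce : ∀ (n : ℕ) (a : Fin n → A),
      mM n (fun i => iota (a i)) - iota (mA n a) ∈ LinearMap.range h

/-- `(f, ft)` is a morphism of formal bigraded deformations (of `s`-th type)
from the deformation `(MA, hA, ιA, mMA)` of `(A, mA)` to the deformation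
`(MB, hB, ιB, mMB)` of `(B, mB)`. -/
structure IsDefoMor (k : Type) [CommRing k] {A B MA MB : Type}
    [AddCommGroup A] [Module k A] [AddCommGroup B] [Module k B]
    [AddCommGroup MA] [Module k MA] [AddCommGroup MB] [Module k MB]
    (s : ℤ)
    (mA : Ops k A) (GMA : ℤ × ℤ → Submodule k MA)
    (hA : MA →ₗ[k] MA) (iotaA : A →ₗ[k] MA) (mMA : Ops k MA)
    (mB : Ops k B) (GMB : ℤ × ℤ → Submodule k MB)
    (hB : MB →ₗ[k] MB) (iotaB : B →ₗ[k] MB) (mMB : Ops k MB)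
    (f : MorMaps k A B) (ft : MorMaps k MA MB) : Prop where
  fMI : ∀ n, 1 ≤ n → MI mA mB f n
  ftMI : ∀ n, 1 ≤ n → MI mMA mMB ft n
  ftEquiv : ∀ (n : ℕ) (a : Fin n → MA) (i : Fin n) (x : MA),
      ft n (Function.update a i (hA x)) = hB (ft n (Function.update a i x))
  ftHomog : Homog2Mor GMA GMB ft (fun n => ((1 - (n : ℤ)) * s, (1 - (n : ℤ)) * (1 - s)))
  ftReduce : ∀ (n : ℕ) (a : Fin n → A),
      ft n (fun i => iotaA (a i)) - iotaB (f n a) ∈ LinearMap.range hB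

end Paper

namespace Paper

variable {k M : Type} [CommRing k] [AddCommGroup M] [Module k M]

lemma update_const (w z : M) :
    Function.update (fun _ : Fin 1 => w) 0 z = fun _ : Fin 1 => z := by
  funext i; fin_cases i; simp

lemma unary_add (m : MultilinearMap k (fun _ : Fin 1 => M) M) (x y : M) :
    m (fun _ => x + y) = m (fun _ => x) + m (fun _ => y) := by
  have h1 := m.map_update_add (fun _ : Fin 1 => x) 0 x y
  rw [update_const x (x + y), update_const x x, update_const x y] at h1
  exact h1

lemma unary_smul (m : MultilinearMap k (fun _ : Fin 1 => M) M) (c : k) (x : M) :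
    m (fun _ => c • x) = c • m (fun _ => x) := by
  have h1 := m.map_update_smul (fun _ : Fin 1 => x) 0 c x
  rw [update_const x (c • x), update_const x x] at h1
  exact h1

/-- The submodule `D(A_ħ) = {a ∈ A_ħ : m̃₁(a) ∈ ħ·A_ħ}` of a formal bigraded
deformation. -/
def Dsub (h : M →ₗ[k] M) (mM : Ops k M) : Submodule k M where
  carrier := {x | mM 1 (fun _ => x) ∈ LinearMap.range h}
  add_mem' := by
    intro a b ha hb
    simp only [Set.mem_setOf_eq] at ha hb ⊢
    rw [unary_add]
    exact Submodule.add_mem _ ha hb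
  zero_mem' := by
    simp only [Set.mem_setOf_eq]
    rw [(mM 1).map_coord_zero (0 : Fin 1) rfl]
    exact Submodule.zero_mem _
  smul_mem' := by
    intro c a ha
    simp only [Set.mem_setOf_eq] at ha ⊢
    rw [unary_smul]
    exact Submodule.smul_mem _ _ ha

/-!
Since `m̃₁` commutes with `ħ` and `m̃₁² = 0`, torsion-freeness makes `ħ⁻¹m̃₁` well defined on
`D(A_ħ) = m̃₁⁻¹(ħA_ħ)`, with values in `ker m̃₁ ⊆ D(A_ħ)`. The Stasheff identity `SI(2)`
shows that `m̃₂` preserves `D(A_ħ)`, while `ħ^{n-2}m̃_n` lands in `ħA_ħ ⊆ D(A_ħ)` for `n ≥ 3`.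
Multiplying the `n`-th Stasheff sum of the `m̃_i^D` by `ħ²` gives `ħ^{n-1}` times that of the
`m̃_i`, so the Stasheff identities descend by torsion-freeness. `D(A_ħ)` is a homogeneous
submodule since `m̃₁` and `ħ` are homogeneous, and `ħ^{n-2}m̃_n` has bidegree
`(2-n)(s, 1-s) + (n-2)(-1, 1) = (2-n)(s+1, -s)`, of type `s+1`. If `x_N → y` `ħ`-adically with
`x_N ∈ D(A_ħ)`, the quotients `u_N = (y - x_N)/ħ^N` satisfy
`u_N = (x_{N+1} - x_N)/ħ^N + ħu_{N+1}`, so they lie in `D(A_ħ)`, and so does `y = x_0 + u_0`.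
Finally, if `m₁ = 0` then `m̃₁` maps `A_ħ = ι(A) + ħA_ħ` into `ħA_ħ`.
-/

section Grading

open DirectSum

variable {ι : Type*} (ℳ : ι → Submodule k M)

theorem pow_mem_of_degree [AddMonoid ι] {f : M →ₗ[k] M} {d : ι}
    (hf : ∀ i, ∀ x ∈ ℳ i, f x ∈ ℳ (i + d)) (N : ℕ) {i : ι} {x : M} (hx : x ∈ ℳ i) :
    (f ^ N) x ∈ ℳ (i + N • d) := by
  induction N with
  | zero => simpa using hx
  | succ N ih =>
    rw [pow_succ', Module.End.mul_apply, succ_nsmul, ← add_assoc]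
    exact hf _ _ ih

variable [DecidableEq ι] [Decomposition ℳ]

theorem isInternal_comap_subtype_of_isHomogeneous {p : Submodule k M}
    (hp : SetLike.IsHomogeneous ℳ p) : IsInternal fun i => (ℳ i).comap p.subtype := by
  classical
  refine (isInternal_submodule_iff_iSupIndep_and_iSup_eq_top _).mpr ⟨?_, ?_⟩
  · rw [← iSupIndep_map_orderIso_iff p.mapIic]
    refine .of_coe_Iic_comp ((Decomposition.isInternal ℳ).submodule_iSupIndep.mono fun i => ?_)
    change ((ℳ i).comap p.subtype).map p.subtype ≤ ℳ i
    exact Submodule.map_comap_le _ _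
  · rw [eq_top_iff]
    rintro ⟨x, hx⟩ -
    have hsum : (⟨x, hx⟩ : p) = ∑ i ∈ (decompose ℳ x).support, ⟨_, hp i hx⟩ :=
      Subtype.ext (by simp [sum_support_decompose])
    rw [hsum]
    exact Submodule.sum_mem _ fun i _ => Submodule.mem_iSup_of_mem i (decompose ℳ x i).2

variable [AddGroup ι]

theorem decompose_apply_add_of_degree {f : M →ₗ[k] M} {d : ι}
    (hf : ∀ i, ∀ x ∈ ℳ i, f x ∈ ℳ (i + d)) (x : M) (i : ι) :
    (decompose ℳ (f x) (i + d) : M) = f (decompose ℳ x i) := by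
  induction x using Decomposition.inductionOn ℳ with
  | zero => simp
  | @homogeneous j x =>
    rw [decompose_coe]
    by_cases hji : j = i
    · subst hji
      rw [decompose_of_mem_same ℳ (hf j x x.2), of_eq_same]
    · rw [decompose_of_mem_ne ℳ (hf j x x.2) (by simpa using hji)]
      simp [of_eq_of_ne _ _ _ (Ne.symm hji)]
  | add x y hx hy => simp [hx, hy]

theorem isHomogeneous_range_of_degree {f : M →ₗ[k] M} {d : ι}
    (hf : ∀ i, ∀ x ∈ ℳ i, f x ∈ ℳ (i + d)) :
    SetLike.IsHomogeneous ℳ (LinearMap.range f) := by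
  rintro i _ ⟨x, rfl⟩
  rw [← sub_add_cancel i d, decompose_apply_add_of_degree ℳ hf]
  exact LinearMap.mem_range_self f _

theorem isHomogeneous_comap_of_degree {f : M →ₗ[k] M} {d : ι}
    (hf : ∀ i, ∀ x ∈ ℳ i, f x ∈ ℳ (i + d)) {q : Submodule k M}
    (hq : SetLike.IsHomogeneous ℳ q) : SetLike.IsHomogeneous ℳ (q.comap f) := by
  intro i x hx
  rw [Submodule.mem_comap, ← decompose_apply_add_of_degree ℳ hf]
  exact hq _ hx

theorem mem_of_apply_mem_of_degree {f : M →ₗ[k] M} {d : ι} (hinj : Function.Injective f)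
    (hf : ∀ i, ∀ x ∈ ℳ i, f x ∈ ℳ (i + d)) {i : ι} {x : M} (hx : f x ∈ ℳ (i + d)) :
    x ∈ ℳ i := by
  have hcomp : ∀ j ≠ i, (decompose ℳ x j : M) = 0 := fun j hj =>
    hinj <| by
      rw [← decompose_apply_add_of_degree ℳ hf, map_zero,
        decompose_of_mem_ne ℳ hx (by simpa using hj.symm)]
  have hx_eq : x = decompose ℳ x i := by
    apply (decompose ℳ).injective
    ext j
    by_cases hji : j = i
    · subst hji; rw [decompose_coe, of_eq_same]
    · simp [of_eq_of_ne _ _ _ hji, hcomp j hji]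
  rw [hx_eq]
  exact (decompose ℳ x i).2

end Grading

noncomputable def unaryₗ (m : Ops k M) : M →ₗ[k] M :=
  (MultilinearMap.ofSubsingleton k M M (0 : Fin 1)).symm (m 1)

theorem unaryₗ_apply (m : Ops k M) (x : M) : unaryₗ m x = m 1 (fun _ => x) := rfl

theorem unaryₗ_unaryₗ_of_SI_one {m : Ops k M} (hSI : SI m 1) (x : M) :
    unaryₗ m (unaryₗ m x) = 0 := by
  simpa [SIsum, Finset.sum_range_succ, inner, unaryₗ_apply] using hSI fun _ => x

theorem unaryₗ_map_two_of_SI_two {m : Ops k M} (hSI : SI m 2) (a : Fin 2 → M) :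
    unaryₗ m (m 2 a) = m 2 (Function.update a 0 (unaryₗ m (a 0))) +
      m 2 (Function.update a 1 (unaryₗ m (a 1))) := by
  have hSIa := hSI fun i => if i = 0 then a 0 else a 1
  simp only [SIsum, Finset.sum_range_succ, Finset.sum_range_zero, inner] at hSIa
  norm_num at hSIa
  have hleft : (fun i : Fin 2 => if i = 0 then m 1 (fun _ => a 0) else if i = 0 then a 0 else a 1) =
      Function.update a 0 (unaryₗ m (a 0)) := by
    funext i; fin_cases i <;> rfl
  have hargs : (fun j : Fin 2 => if j = 0 then a 0 else a 1) = a := by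
    funext i; fin_cases i <;> rfl
  have hright : (fun i : Fin 2 => if i = 0 then (if i = 0 then a 0 else a 1)
      else if (i : ℕ) = 1 then m 1 (fun _ => a 1) else if i = 0 then a 0 else a 1) =
      Function.update a 1 (unaryₗ m (a 1)) := by
    funext i; fin_cases i <;> rfl
  rw [hleft, hargs, hright] at hSIa
  rw [← sub_eq_zero, ← hSIa, unaryₗ_apply]
  abel

theorem inner_apply_self (m : Ops k M) (r n : ℕ) (b : ℕ → M) :
    inner m r n b r = m n fun j => b (r + j) := by
  simp [inner]

theorem coe_inner {p : Submodule k M} (mp : Ops k p) (m : Ops k M) (r n t : ℕ) (a : ℕ → p) :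
    (fun i : Fin (r + 1 + t) => ((inner mp r n a i : p) : M)) =
      Function.update (fun i : Fin (r + 1 + t) => inner m r n (fun j => a j) i) ⟨r, by omega⟩
        (mp n (fun j => a (r + j)) : M) := by
  funext i
  rcases lt_trichotomy (i : ℕ) r with hi | hi | hi
  · rw [Function.update_of_ne (Fin.ne_of_val_ne hi.ne)]
    simp [inner, hi]
  · rw [show i = ⟨r, by omega⟩ from Fin.ext hi, Function.update_self, inner_apply_self]
  · rw [Function.update_of_ne (Fin.ne_of_val_ne hi.ne')]
    simp [inner, hi.ne', not_lt.mpr hi.le]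

theorem update_inner_apply_self (m : Ops k M) (r n t : ℕ) (b : ℕ → M) :
    Function.update (fun i : Fin (r + 1 + t) => inner m r n b i) ⟨r, by omega⟩
      (m n fun j => b (r + j)) = fun i : Fin (r + 1 + t) => inner m r n b i := by
  rw [← inner_apply_self]
  exact Function.update_eq_self _ _

theorem coe_update {ι : Type*} [DecidableEq ι] {p : Submodule k M} (a : ι → p) (j : ι) (z : p) :
    (fun i => (Function.update a j z i : M)) = Function.update (fun i => (a i : M)) j z :=
  Function.comp_update Subtype.val a j z

structure IsTorsionFreeAInfty (h : M →ₗ[k] M) (m : Ops k M) : Prop where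
  injective : Function.Injective h
  map_update_h : ∀ (n : ℕ) (a : Fin n → M) (i : Fin n) (x : M),
      m n (Function.update a i (h x)) = h (m n (Function.update a i x))
  si : ∀ n, 1 ≤ n → SI m n

namespace IsTorsionFreeAInfty

variable {h : M →ₗ[k] M} {m : Ops k M}

theorem map_update_pow (H : IsTorsionFreeAInfty h m) (N n : ℕ) (a : Fin n → M) (i : Fin n)
    (x : M) :
    m n (Function.update a i ((h ^ N) x)) = (h ^ N) (m n (Function.update a i x)) := by
  induction N with
  | zero => rfl
  | succ N ih => rw [pow_succ', Module.End.mul_apply, H.map_update_h, ih, Module.End.mul_apply]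

theorem unaryₗ_apply_h (H : IsTorsionFreeAInfty h m) (x : M) :
    unaryₗ m (h x) = h (unaryₗ m x) := by
  have := H.map_update_h 1 (fun _ => x) 0 x
  rwa [update_const, update_const] at this

theorem range_le_Dsub (H : IsTorsionFreeAInfty h m) : LinearMap.range h ≤ Dsub h m := by
  rintro _ ⟨x, rfl⟩
  exact ⟨unaryₗ m x, (H.unaryₗ_apply_h x).symm⟩

theorem mem_Dsub_of_unary_eq (H : IsTorsionFreeAInfty h m) {x b : M}
    (hb : unaryₗ m x = h b) : b ∈ Dsub h m := by
  have hb0 : unaryₗ m b = 0 := H.injective <| by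
    rw [← H.unaryₗ_apply_h, ← hb, unaryₗ_unaryₗ_of_SI_one (H.si 1 le_rfl), map_zero]
  exact ⟨0, by rw [map_zero, ← unaryₗ_apply, hb0]⟩

theorem map_two_mem_Dsub (H : IsTorsionFreeAInfty h m) (a : Fin 2 → M)
    (ha : ∀ i, a i ∈ Dsub h m) : m 2 a ∈ Dsub h m := by
  obtain ⟨b₀, hb₀⟩ := ha 0
  obtain ⟨b₁, hb₁⟩ := ha 1
  change unaryₗ m (m 2 a) ∈ LinearMap.range h
  rw [unaryₗ_map_two_of_SI_two (H.si 2 one_le_two), unaryₗ_apply, unaryₗ_apply, ← hb₀, ← hb₁,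
    H.map_update_h, H.map_update_h]
  exact add_mem (LinearMap.mem_range_self h _) (LinearMap.mem_range_self h _)

theorem pow_map_mem_Dsub (H : IsTorsionFreeAInfty h m) (N : ℕ) (a : Fin (N + 2) → M)
    (ha : ∀ i, a i ∈ Dsub h m) : (h ^ N) (m (N + 2) a) ∈ Dsub h m := by
  cases N with
  | zero => exact H.map_two_mem_Dsub a ha
  | succ N =>
    rw [pow_succ', Module.End.mul_apply]
    exact H.range_le_Dsub (LinearMap.mem_range_self h _)

noncomputable def hD (H : IsTorsionFreeAInfty h m) : Dsub h m →ₗ[k] Dsub h m :=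
  h.restrict fun x _ => H.range_le_Dsub (LinearMap.mem_range_self h x)

theorem coe_hD_apply (H : IsTorsionFreeAInfty h m) (x : Dsub h m) : (H.hD x : M) = h x := rfl

theorem coe_hD_pow_apply (H : IsTorsionFreeAInfty h m) (N : ℕ) (x : Dsub h m) :
    ((H.hD ^ N) x : M) = (h ^ N) x := by
  rw [hD, Module.End.pow_restrict]
  rfl

noncomputable def unaryDivH (H : IsTorsionFreeAInfty h m) : Dsub h m →ₗ[k] Dsub h m :=
  LinearMap.codRestrictOfInjective (unaryₗ m ∘ₗ (Dsub h m).subtype) (h ∘ₗ (Dsub h m).subtype)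
    (H.injective.comp Subtype.val_injective) fun x => by
      obtain ⟨b, hb⟩ := x.2
      exact ⟨⟨b, H.mem_Dsub_of_unary_eq hb.symm⟩, hb⟩

theorem h_unaryDivH (H : IsTorsionFreeAInfty h m) (x : Dsub h m) :
    h (H.unaryDivH x) = unaryₗ m x :=
  LinearMap.codRestrictOfInjective_comp_apply (unaryₗ m ∘ₗ (Dsub h m).subtype)
    (h ∘ₗ (Dsub h m).subtype) _ _ x

noncomputable def mD (H : IsTorsionFreeAInfty h m) : Ops k (Dsub h m)
  -- the `0`-ary component never enters the Stasheff identities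
  | 0 => 0
  | 1 => MultilinearMap.ofSubsingleton k _ _ 0 H.unaryDivH
  | N + 2 =>
    MultilinearMap.codRestrict
      ((h ^ N).compMultilinearMap ((m (N + 2)).compLinearMap fun _ => (Dsub h m).subtype))
      (Dsub h m) fun a => H.pow_map_mem_Dsub N _ fun i => (a i).2

theorem mD_one_apply (H : IsTorsionFreeAInfty h m) (a : Fin 1 → Dsub h m) :
    H.mD 1 a = H.unaryDivH (a 0) := rfl

theorem coe_mD_add_two (H : IsTorsionFreeAInfty h m) (N : ℕ) (a : Fin (N + 2) → Dsub h m) :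
    (H.mD (N + 2) a : M) = (h ^ N) (m (N + 2) fun i => a i) := rfl

theorem h_coe_mD (H : IsTorsionFreeAInfty h m) {n : ℕ} (hn : 1 ≤ n) (a : Fin n → Dsub h m) :
    h (H.mD n a) = (h ^ (n - 1)) (m n fun i => a i) := by
  match n, hn with
  | 1, _ =>
    rw [mD_one_apply, h_unaryDivH, pow_zero, Module.End.one_apply, unaryₗ_apply]
    exact congrArg (m 1) (funext fun i => by rw [Subsingleton.elim i 0])
  | N + 2, _ => rw [coe_mD_add_two, ← Module.End.mul_apply, ← pow_succ']; rfl

theorem h_map_update_coe_mD (H : IsTorsionFreeAInfty h m) {n o : ℕ} (hn : 1 ≤ n)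
    (c : Fin o → M) (j : Fin o) (a : Fin n → Dsub h m) :
    h (m o (Function.update c j (H.mD n a))) =
      (h ^ (n - 1)) (m o (Function.update c j (m n fun i => a i))) := by
  rw [← H.map_update_h, H.h_coe_mD hn, H.map_update_pow]

theorem h_h_coe_mD_inner (H : IsTorsionFreeAInfty h m) {n r n' t : ℕ} (hn : r + n' + t = n)
    (hn' : 1 ≤ n') (a : ℕ → Dsub h m) :
    h (h (H.mD (r + 1 + t) fun i => inner H.mD r n' a i)) =
      (h ^ (n - 1)) (m (r + 1 + t) fun i => inner m r n' (fun j => a j) i) := by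
  rw [H.h_coe_mD (by omega), coe_inner H.mD m, ← Module.End.mul_apply, ← pow_succ', pow_succ,
    Module.End.mul_apply, H.h_map_update_coe_mD hn', update_inner_apply_self,
    ← Module.End.mul_apply, ← pow_add]
  congr 2
  omega

theorem SI_mD (H : IsTorsionFreeAInfty h m) {n : ℕ} (hn : 1 ≤ n) : SI H.mD n := by
  intro a
  have key : (h ∘ₗ h ∘ₗ (Dsub h m).subtype) (SIsum H.mD n a) =
      (h ^ (n - 1)) (SIsum m n fun j => a j) := by
    simp only [SIsum, map_sum]
    refine Finset.sum_congr rfl fun r _ => Finset.sum_congr rfl fun n' _ =>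
      Finset.sum_congr rfl fun t _ => ?_
    split_ifs with hc
    · rw [map_zsmul, map_zsmul, LinearMap.comp_apply, LinearMap.comp_apply,
        Submodule.subtype_apply, H.h_h_coe_mD_inner hc.1 hc.2]
    · simp only [map_zero]
  rw [H.si n hn, map_zero, LinearMap.comp_apply, LinearMap.comp_apply] at key
  exact Subtype.ext (H.injective (H.injective (key.trans (by simp))))

theorem mD_map_update_hD (H : IsTorsionFreeAInfty h m) (n : ℕ) (a : Fin n → Dsub h m)
    (i : Fin n) (x : Dsub h m) :
    H.mD n (Function.update a i (H.hD x)) = H.hD (H.mD n (Function.update a i x)) := by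
  match n with
  | 0 => exact i.elim0
  | 1 =>
    apply Subtype.ext
    apply H.injective
    rw [Subsingleton.elim i 0, mD_one_apply, mD_one_apply, Function.update_self,
      Function.update_self, coe_hD_apply, h_unaryDivH, coe_hD_apply, h_unaryDivH,
      H.unaryₗ_apply_h]
  | N + 2 =>
    apply Subtype.ext
    rw [coe_hD_apply, coe_mD_add_two, coe_mD_add_two, coe_update, coe_update, coe_hD_apply,
      H.map_update_h, ← Module.End.mul_apply, ← pow_succ, pow_succ', Module.End.mul_apply]

theorem isTorsionFreeAInfty_mD (H : IsTorsionFreeAInfty h m) :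
    IsTorsionFreeAInfty H.hD H.mD :=
  ⟨fun _ _ hxy => Subtype.ext (H.injective (congrArg Subtype.val hxy)), H.mD_map_update_hD,
    fun _ => H.SI_mD⟩

end IsTorsionFreeAInfty

namespace IsDefo

open DirectSum

variable {A : Type} [AddCommGroup A] [Module k A] {s : ℤ} {GA : ℤ × ℤ → Submodule k A}
  {mA : Ops k A} {GM : ℤ × ℤ → Submodule k M} {h : M →ₗ[k] M} {iota : A →ₗ[k] M}
  {mM : Ops k M}

theorem isTorsionFreeAInfty (hdef : IsDefo k s GA mA GM h iota mM) :
    IsTorsionFreeAInfty h mM :=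
  ⟨hdef.torsionFree, hdef.hLinear, hdef.mSI⟩

theorem h_mem_add (hdef : IsDefo k s GA mA GM h iota mM) :
    ∀ i, ∀ x ∈ GM i, h x ∈ GM (i + (-1, 1)) := fun i x hx => by
  rw [show i + (-1, 1) = (i.1 - 1, i.2 + 1) by ext <;> simp [sub_eq_add_neg]]
  exact hdef.hHom i x hx

theorem unaryₗ_mem_add (hdef : IsDefo k s GA mA GM h iota mM) :
    ∀ i, ∀ x ∈ GM i, unaryₗ mM x ∈ GM (i + (s, 1 - s)) := fun i x hx => by
  rw [unaryₗ_apply]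
  simpa using hdef.mHomog 1 (fun _ => i) (fun _ => x) fun _ => hx

theorem isHomogeneous_Dsub [Decomposition GM] (hdef : IsDefo k s GA mA GM h iota mM) :
    SetLike.IsHomogeneous GM (Dsub h mM) :=
  isHomogeneous_comap_of_degree GM hdef.unaryₗ_mem_add
    (isHomogeneous_range_of_degree GM hdef.h_mem_add)

theorem homog2_mD [Decomposition GM] (hdef : IsDefo k s GA mA GM h iota mM) :
    Homog2 (fun pq => (GM pq).comap (Dsub h mM).subtype) hdef.isTorsionFreeAInfty.mD
      fun n => ((2 - (n : ℤ)) * (s + 1), (2 - (n : ℤ)) * (1 - (s + 1))) := by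
  intro n p a hp
  match n with
  | 0 => exact zero_mem _
  | 1 =>
    refine mem_of_apply_mem_of_degree GM hdef.torsionFree hdef.h_mem_add ?_
    rw [Submodule.subtype_apply, IsTorsionFreeAInfty.mD_one_apply,
      IsTorsionFreeAInfty.h_unaryDivH]
    convert hdef.unaryₗ_mem_add _ _ (hp 0) using 2
    · ext <;> simp <;> ring
    · rfl
  | N + 2 =>
    change (h ^ N) _ ∈ GM _
    convert pow_mem_of_degree GM hdef.h_mem_add N (hdef.mHomog (N + 2) p _ hp) using 2
    · ext <;> simp <;> ring
    · rfl

theorem iInf_range_hD_pow (hdef : IsDefo k s GA mA GM h iota mM) :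
    ⨅ N : ℕ, LinearMap.range (hdef.isTorsionFreeAInfty.hD ^ N) = ⊥ := by
  refine eq_bot_iff.mpr fun x hx => (Submodule.mem_bot k).mpr (Subtype.ext ?_)
  have hxM : (x : M) ∈ ⨅ N : ℕ, LinearMap.range (h ^ N) :=
    (Submodule.mem_iInf _).mpr fun N => by
      obtain ⟨z, hz⟩ := (Submodule.mem_iInf _).mp hx N
      exact ⟨z, by rw [← hdef.isTorsionFreeAInfty.coe_hD_pow_apply, hz]⟩
  rw [hdef.sep] at hxM
  exact (Submodule.mem_bot k).mp hxM

theorem complete_Dsub (hdef : IsDefo k s GA mA GM h iota mM) (pq : ℤ × ℤ)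
    (x : ℕ → Dsub h mM) (hx : ∀ N, x N ∈ (GM pq).comap (Dsub h mM).subtype)
    (hcauchy : ∀ N, x (N + 1) - x N ∈ LinearMap.range (hdef.isTorsionFreeAInfty.hD ^ N)) :
    ∃ y ∈ (GM pq).comap (Dsub h mM).subtype,
      ∀ N, y - x N ∈ LinearMap.range (hdef.isTorsionFreeAInfty.hD ^ N) := by
  set H := hdef.isTorsionFreeAInfty
  have hinj : ∀ N : ℕ, Function.Injective (h ^ N : Module.End k M) := fun N => by
    rw [Module.End.coe_pow]
    exact H.injective.iterate N
  choose z hz using fun N => LinearMap.mem_range.mp (hcauchy N)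
  have hz' : ∀ N, (h ^ N) (z N : M) = x (N + 1) - x N := fun N => by
    rw [← H.coe_hD_pow_apply, hz N, Submodule.coe_sub]
  obtain ⟨y, hy, hyx⟩ := hdef.complete pq (fun N => x N) hx fun N => ⟨z N, hz' N⟩
  choose u hu using fun N => LinearMap.mem_range.mp (hyx N)
  have hu_succ : ∀ N, u N = z N + h (u (N + 1)) := fun N => hinj N <| by
    rw [map_add, ← Module.End.mul_apply, ← pow_succ, hu, hu, hz']
    abel
  have hu_mem : ∀ N, u N ∈ Dsub h mM := fun N => by
    rw [hu_succ N]
    exact add_mem (z N).2 (H.range_le_Dsub (LinearMap.mem_range_self h _))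
  have hy_mem : y ∈ Dsub h mM := by
    have hy0 : y = x 0 + u 0 := by
      have hu0 := hu 0
      rw [pow_zero, Module.End.one_apply] at hu0
      rw [hu0]
      abel
    rw [hy0]
    exact add_mem (x 0).2 (hu_mem 0)
  refine ⟨⟨y, hy_mem⟩, hy, fun N => ⟨⟨u N, hu_mem N⟩, Subtype.ext ?_⟩⟩
  rw [H.coe_hD_pow_apply]
  exact hu N

theorem Dsub_eq_top (hdef : IsDefo k s GA mA GM h iota mM) (hmin : mA 1 = 0) :
    Dsub h mM = ⊤ := by
  refine eq_top_iff.mpr fun x _ => ?_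
  obtain ⟨a, b, rfl⟩ := hdef.split x
  have hreduce := hdef.reduce 1 fun _ => a
  rw [hmin, _root_.zero_apply, map_zero, sub_zero] at hreduce
  exact add_mem hreduce (hdef.isTorsionFreeAInfty.range_le_Dsub (LinearMap.mem_range_self h b))

theorem isDefo_Dsub (hdef : IsDefo k s GA mA GM h iota mM) :
    IsDefo k (s + 1) (fun pq => (GM pq).comap (Dsub h mM).subtype) hdef.isTorsionFreeAInfty.mD
      (fun pq => (GM pq).comap (Dsub h mM).subtype) hdef.isTorsionFreeAInfty.hD LinearMap.id
      hdef.isTorsionFreeAInfty.mD := by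
  have := hdef.internalM.chooseDecomposition
  have HD := hdef.isTorsionFreeAInfty.isTorsionFreeAInfty_mD
  exact
    { internalM := isInternal_comap_subtype_of_isHomogeneous GM hdef.isHomogeneous_Dsub
      hHom := fun pq x hx => hdef.hHom pq x hx
      torsionFree := HD.injective
      sep := hdef.iInf_range_hD_pow
      complete := hdef.complete_Dsub
      iotaInj := Function.injective_id
      iotaHom := fun _ _ hx => hx
      split := fun y => ⟨y, 0, by simp⟩
      mSI := HD.si
      mHomog := hdef.homog2_mD
      hLinear := HD.map_update_h
      reduce := fun n a => by simp }

end IsDefo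

theorem statement17_general (k : Type) [Field k] {A M : Type}
    [AddCommGroup A] [Module k A] [AddCommGroup M] [Module k M]
    (s : ℤ)
    (GA : ℤ × ℤ → Submodule k A) (mA : Ops k A)
    (GM : ℤ × ℤ → Submodule k M) (h : M →ₗ[k] M) (iota : A →ₗ[k] M) (mM : Ops k M)
    (hdef : IsDefo k s GA mA GM h iota mM) :
    -- (1) closure of `D(A_ħ)` under the operations `ħ^{n-2}·m̃_n`
    (∀ (n : ℕ), 2 ≤ n → ∀ a : Fin n → M, (∀ i, a i ∈ Dsub h mM) →
      (h ^ (n - 2)) (mM n a) ∈ Dsub h mM) ∧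
    (∀ x b : M, x ∈ Dsub h mM → mM 1 (fun _ => x) = h b → b ∈ Dsub h mM) ∧
    -- (2)–(4): the `A_∞`-structure `mD` on `D(A_ħ)` makes it a formal bigraded
    -- deformation (in particular `ħ`-torsion-free and bigraded complete, hence
    -- `ħ`-topologically free) of an `A_∞`-algebra of `(s+1)`-th type
    (∃ (A' : ModuleCat.{0} k) (GA' : ℤ × ℤ → Submodule k A') (mA' : Ops k A')
       (iota' : A' →ₗ[k] ↥(Dsub h mM))
       (hD : ↥(Dsub h mM) →ₗ[k] ↥(Dsub h mM)) (mD : Ops k ↥(Dsub h mM)),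
      (∀ x : ↥(Dsub h mM), ((hD x : M)) = h (x : M)) ∧
      (∀ (n : ℕ), 2 ≤ n → ∀ a : Fin n → ↥(Dsub h mM),
        ((mD n a : M)) = (h ^ (n - 2)) (mM n (fun i => ((a i : M))))) ∧
      (∀ a : Fin 1 → ↥(Dsub h mM),
        h ((mD 1 a : M)) = mM 1 (fun i => ((a i : M)))) ∧
      (∀ n, 1 ≤ n → SI mA' n) ∧
      IsDefo k (s+1) GA' mA'
        (fun pq => (GM pq).comap (Dsub h mM).subtype) hD iota' mD) ∧
    -- if `A` is minimal then `D(A_ħ)` is all of `A_ħ` (so `D(A_ħ) = T(A_ħ)`)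
    (mA 1 = 0 → Dsub h mM = ⊤) := by
  set H := hdef.isTorsionFreeAInfty
  refine ⟨fun n hn a ha => ?_, fun x b _ hb => H.mem_Dsub_of_unary_eq hb,
    ⟨ModuleCat.of k (Dsub h mM), _, H.mD, LinearMap.id, H.hD, H.mD, H.coe_hD_apply,
      fun n hn a => ?_, fun a => by simpa using H.h_coe_mD le_rfl a, fun _ => H.SI_mD,
      hdef.isDefo_Dsub⟩,
    hdef.Dsub_eq_top⟩
  · obtain ⟨N, rfl⟩ : ∃ N, n = N + 2 := ⟨n - 2, by omega⟩
    simpa using H.pow_map_mem_Dsub N a ha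
  · obtain ⟨N, rfl⟩ : ∃ N, n = N + 2 := ⟨n - 2, by omega⟩
    simpa using H.coe_mD_add_two N a

/-- **the functor `D` preserves the deformation structure.**  Let
`A_ħ = (M, GM, h, ι, mM)` be a formal bigraded deformation of an `A_∞`-algebra `A` with
compatible bigrading of `s`-th type, and set `D(A_ħ) = {a : m̃₁ a ∈ ħ·A_ħ}` with
structure maps `m̃_i^D = ħ^{i-2}·m̃_i` restricted to `D(A_ħ)`.  Then: (1) the maps
`m̃_i^D` map `D(A_ħ)`-tuples into `D(A_ħ)`; (2) `D(A_ħ)` is an `A_∞`-algebra over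
`k[ħ]`; (3) `D(A_ħ)` is `ħ`-torsion-free and bigraded complete, hence `ħ`-topologically
free; (4) `D(A_ħ)` is a formal bigraded deformation of an `A_∞`-algebra with compatible
bigrading of `(s+1)`-th type (clauses (2)–(4) are packaged in the `IsDefo` predicate).
If moreover `m₁ = 0` on `A`, then `D(A_ħ) = A_ħ` (and then `D(A_ħ) = T(A_ħ)`). -/
theorem statement17 (k : Type) [Field k] {A M : Type}
    [AddCommGroup A] [Module k A] [AddCommGroup M] [Module k M]
    (s : ℤ)
    (GA : ℤ × ℤ → Submodule k A) (mA : Ops k A)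
    (hintA : DirectSum.IsInternal GA) (hSIA : ∀ n, 1 ≤ n → SI mA n)
    (hHomA : Homog2 GA mA (fun n => ((2 - (n : ℤ)) * s, (2 - (n : ℤ)) * (1 - s))))
    (GM : ℤ × ℤ → Submodule k M) (h : M →ₗ[k] M) (iota : A →ₗ[k] M) (mM : Ops k M)
    (hdef : IsDefo k s GA mA GM h iota mM) :
    -- (1) closure of `D(A_ħ)` under the operations `ħ^{n-2}·m̃_n`
    (∀ (n : ℕ), 2 ≤ n → ∀ a : Fin n → M, (∀ i, a i ∈ Dsub h mM) →
      (h ^ (n - 2)) (mM n a) ∈ Dsub h mM) ∧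
    (∀ x b : M, x ∈ Dsub h mM → mM 1 (fun _ => x) = h b → b ∈ Dsub h mM) ∧
    -- (2)–(4): the `A_∞`-structure `mD` on `D(A_ħ)` makes it a formal bigraded
    -- deformation (in particular `ħ`-torsion-free and bigraded complete, hence
    -- `ħ`-topologically free) of an `A_∞`-algebra of `(s+1)`-th type
    (∃ (A' : ModuleCat.{0} k) (GA' : ℤ × ℤ → Submodule k A') (mA' : Ops k A')
       (iota' : A' →ₗ[k] ↥(Dsub h mM))
       (hD : ↥(Dsub h mM) →ₗ[k] ↥(Dsub h mM)) (mD : Ops k ↥(Dsub h mM)),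
      (∀ x : ↥(Dsub h mM), ((hD x : M)) = h (x : M)) ∧
      (∀ (n : ℕ), 2 ≤ n → ∀ a : Fin n → ↥(Dsub h mM),
        ((mD n a : M)) = (h ^ (n - 2)) (mM n (fun i => ((a i : M))))) ∧
      (∀ a : Fin 1 → ↥(Dsub h mM),
        h ((mD 1 a : M)) = mM 1 (fun i => ((a i : M)))) ∧
      (∀ n, 1 ≤ n → SI mA' n) ∧
      IsDefo k (s+1) GA' mA'
        (fun pq => (GM pq).comap (Dsub h mM).subtype) hD iota' mD) ∧
    -- if `A` is minimal then `D(A_ħ)` is all of `A_ħ` (so `D(A_ħ) = T(A_ħ)`)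
    (mA 1 = 0 → Dsub h mM = ⊤) :=
  statement17_general k s GA mA GM h iota mM hdef

end Paper
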